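/- arXiv:2602.07178 — 4 statements merged into one kernel-verified Lean document; each statement's English description precedes it below -/
import Mathlib

section
/- For fixed positive constants α, K, D, H, g, the equation (αK/D) + (gH/α) + (gH/D)·a = (gH/α)·e^{αa/D} has a unique positive solution a. -/
/-!
With `x = α a / D` the equation becomes `exp x - 1 - x = α² K / (D g H)`. The left side vanishes
at `0`, is strictly increasing on `[0, ∞)` and is at least `x² / 2` there, so it takes every
positive value exactly once on `(0, ∞)`.
-/

open Real Set

lemma strictMonoOn_exp_sub_self : StrictMonoOn (fun x : ℝ => exp x - x) (Ici 0) := by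
  intro a ha b _ hab
  have hexp_b : exp b = exp a * exp (b - a) := by rw [← exp_add, add_sub_cancel]
  have hgap : b - a + 1 < exp (b - a) := add_one_lt_exp (sub_ne_zero.mpr hab.ne')
  have hexp_a : 1 ≤ exp a := one_le_exp ha
  show exp a - a < exp b - b
  nlinarith

lemma existsUnique_pos_exp_sub_one_sub_self_eq {y : ℝ} (hy : 0 < y) :
    ∃! x : ℝ, 0 < x ∧ exp x - 1 - x = y := by
  have hcont : ContinuousOn (fun x : ℝ => exp x - 1 - x) (Icc 0 (y + 2)) := by fun_prop
  have hlarge : y ≤ exp (y + 2) - 1 - (y + 2) := by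
    nlinarith [quadratic_le_exp_of_nonneg (by linarith : (0 : ℝ) ≤ y + 2)]
  obtain ⟨x, hx_mem, hx_eq⟩ := intermediate_value_Icc (by linarith) hcont
    ⟨by simp [hy.le], hlarge⟩
  have hx_pos : 0 < x := by
    refine hx_mem.1.lt_of_ne ?_
    rintro rfl
    simp only [exp_zero, sub_self] at hx_eq
    linarith
  refine ⟨x, ⟨hx_pos, hx_eq⟩, fun x' ⟨hx'_pos, hx'_eq⟩ => ?_⟩
  refine strictMonoOn_exp_sub_self.injOn hx'_pos.le hx_pos.le ?_
  show exp x' - x' = exp x - x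
  linarith

theorem stmt_0 (α K D H g : ℝ) (hα : 0 < α) (hK : 0 < K) (hD : 0 < D) (hH : 0 < H)
    (hg : 0 < g) :
    ∃! a : ℝ, 0 < a ∧
      α * K / D + g * H / α + g * H / D * a = g * H / α * Real.exp (α * a / D) := by
  have hsubst : ∀ a : ℝ, α * K / D + g * H / α + g * H / D * a = g * H / α * exp (α * a / D) ↔
      exp (α * a / D) - 1 - α * a / D = α ^ 2 * K / (D * g * H) := by
    intro a
    rw [eq_div_iff (by positivity)]
    field_simp
    constructor <;> intro h <;> linarith
  obtain ⟨x, ⟨hx_pos, hx_eq⟩, hx_unique⟩ :=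
    existsUnique_pos_exp_sub_one_sub_self_eq (y := α ^ 2 * K / (D * g * H)) (by positivity)
  have hx : α * (D * x / α) / D = x := by field_simp
  refine ⟨D * x / α, ⟨by positivity, (hsubst _).mpr (by rwa [hx])⟩, ?_⟩
  rintro a ⟨ha_pos, ha_eq⟩
  have hax : α * a / D = x := hx_unique _ ⟨by positivity, (hsubst a).mp ha_eq⟩
  rw [← hax]
  field_simp
end

section
/- For fixed positive constants α, K, D, H, and for g > 0 with a_g defined implicitly by (αK/D) + (gH/α) + (gH/D)·a_g = (gH/α)·e^{αa_g/D} with a_g > 0, the derivative of a_g with respect to g equals −αK/(g²H(e^{αa_g/D} − 1)), which is strictly negative; hence g ↦ a_g is strictly decreasing. -/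
/-!
Multiplying out, the defining equation says `g * ψ (a g) = α K / D` with
`ψ x = (H / α) (exp (α x / D) - 1) - (H / D) x` (`expGap` below), a function vanishing at `0`
with derivative `(H / D) (exp (α x / D) - 1) > 0` for `x > 0`. Hence `a` is the inverse of the strictly decreasing
map `x ↦ α K / (D ψ x)` of `(0, ∞)` onto itself: it is strictly decreasing and continuous, and the
inverse function rule gives its derivative.
-/

open Real Set Filter Topology

section InverseOfMulEqConst

variable {φ a : ℝ → ℝ} {c : ℝ}

theorem strictAntiOn_of_mul_eq_const (hφ : StrictMonoOn φ (Ioi 0)) (hc : 0 < c)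
    (ha : ∀ g, 0 < g → 0 < a g ∧ g * φ (a g) = c) : StrictAntiOn a (Ioi 0) := by
  intro x (hx : 0 < x) y (hy : 0 < y) hxy
  obtain ⟨hax, hx_eq⟩ := ha x hx
  obtain ⟨hay, hy_eq⟩ := ha y hy
  by_contra! hle
  have hφx : 0 < φ (a x) := pos_of_mul_pos_right (hx_eq ▸ hc) hx.le
  have hφle : φ (a x) ≤ φ (a y) := hφ.monotoneOn hax hay hle
  nlinarith

theorem Ioi_subset_image_of_mul_eq_const (hφ : StrictMonoOn φ (Ioi 0))
    (hφ_pos : ∀ x, 0 < x → 0 < φ x) (hc : 0 < c)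
    (ha : ∀ g, 0 < g → 0 < a g ∧ g * φ (a g) = c) : Ioi 0 ⊆ a '' Ioi 0 := by
  intro x (hx : 0 < x)
  have hφx := hφ_pos x hx
  have hg : 0 < c / φ x := div_pos hc hφx
  obtain ⟨hag, hag_eq⟩ := ha _ hg
  refine ⟨c / φ x, hg, hφ.injOn hag hx ?_⟩
  field_simp at hag_eq
  linarith

theorem continuousAt_of_mul_eq_const (hφ : StrictMonoOn φ (Ioi 0))
    (hφ_pos : ∀ x, 0 < x → 0 < φ x) (hc : 0 < c)
    (ha : ∀ g, 0 < g → 0 < a g ∧ g * φ (a g) = c) {g : ℝ} (hg : 0 < g) : ContinuousAt a g := by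
  have hneg : StrictMonoOn (-a) (Ioi 0) := fun x hx y hy hxy =>
    neg_lt_neg (strictAntiOn_of_mul_eq_const hφ hc ha hx hy hxy)
  have himage : (-a) '' Ioi 0 ∈ 𝓝 ((-a) g) := by
    refine mem_of_superset (Iio_mem_nhds (neg_neg_of_pos (ha g hg).1)) fun y (hy : y < 0) => ?_
    obtain ⟨x, hx, hxy⟩ := Ioi_subset_image_of_mul_eq_const hφ hφ_pos hc ha (neg_pos.2 hy)
    exact ⟨x, hx, by simp [hxy]⟩
  simpa only [neg_neg] using (hneg.continuousAt_of_image_mem_nhds (Ioi_mem_nhds hg) himage).neg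

theorem hasDerivAt_of_mul_eq_const (hφ : StrictMonoOn φ (Ioi 0))
    (hφ_pos : ∀ x, 0 < x → 0 < φ x) (hc : 0 < c)
    (ha : ∀ g, 0 < g → 0 < a g ∧ g * φ (a g) = c) {g φ' : ℝ} (hg : 0 < g)
    (hφ' : HasDerivAt φ φ' (a g)) (hφ'_ne : φ' ≠ 0) :
    HasDerivAt a (-(c / (g ^ 2 * φ'))) g := by
  obtain ⟨hag, hag_eq⟩ := ha g hg
  have hφag : φ (a g) = c / g := by field_simp; linarith
  have hinv : HasDerivAt (fun x => c / φ x) (-(g ^ 2 * φ' / c)) (a g) := by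
    refine ((hasDerivAt_const (a g) c).div hφ' (hφ_pos _ hag).ne').congr_deriv ?_
    rw [hφag]
    field_simp
    ring
  have hleft : ∀ᶠ y in 𝓝 g, c / φ (a y) = y := by
    filter_upwards [Ioi_mem_nhds hg] with y (hy : 0 < y)
    rw [← (ha y hy).2]
    field_simp [(hφ_pos _ (ha y hy).1).ne']
  refine (hinv.of_local_left_inverse (continuousAt_of_mul_eq_const hφ hφ_pos hc ha hg)
    (by simp [hc.ne', hg.ne', hφ'_ne]) hleft).congr_deriv ?_
  rw [inv_neg, inv_div, div_mul_eq_div_div_swap, div_div]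

end InverseOfMulEqConst

noncomputable def expGap (α D H x : ℝ) : ℝ :=
  H / α * exp (α * x / D) - H / D * x - H / α

section ExpGap

variable {α D H : ℝ}

theorem expGap_zero : expGap α D H 0 = 0 := by
  simp [expGap]

theorem hasDerivAt_expGap (hα : α ≠ 0) (x : ℝ) :
    HasDerivAt (expGap α D H) (H / D * (exp (α * x / D) - 1)) x := by
  have hlin : HasDerivAt (fun x => α * x / D) (α / D) x := by
    simpa using ((hasDerivAt_id x).const_mul α).div_const D
  refine (((hlin.exp.const_mul (H / α)).sub ((hasDerivAt_id x).const_mul (H / D))).sub_const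
    (H / α)).congr_deriv ?_
  field_simp

theorem expGap_deriv_pos (hα : 0 < α) (hD : 0 < D) (hH : 0 < H) {x : ℝ} (hx : 0 < x) :
    0 < H / D * (exp (α * x / D) - 1) :=
  mul_pos (div_pos hH hD) (sub_pos.2 (one_lt_exp_iff.2 (by positivity)))

theorem strictMonoOn_expGap (hα : 0 < α) (hD : 0 < D) (hH : 0 < H) :
    StrictMonoOn (expGap α D H) (Ici 0) := by
  refine strictMonoOn_of_deriv_pos (convex_Ici 0)
    (fun x _ => (hasDerivAt_expGap hα.ne' x).continuousAt.continuousWithinAt) fun x hx => ?_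
  rw [interior_Ici] at hx
  rw [(hasDerivAt_expGap hα.ne' x).deriv]
  exact expGap_deriv_pos hα hD hH hx

theorem expGap_pos (hα : 0 < α) (hD : 0 < D) (hH : 0 < H) {x : ℝ} (hx : 0 < x) :
    0 < expGap α D H x := by
  simpa only [expGap_zero] using
    strictMonoOn_expGap hα hD hH self_mem_Ici (mem_Ici.2 hx.le) hx

end ExpGap

theorem mul_expGap_eq_iff (α K D H g x : ℝ) :
    g * expGap α D H x = α * K / D ↔
      α * K / D + g * H / α + g * H / D * x = g * H / α * exp (α * x / D) := by
  unfold expGap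
  constructor <;> intro h <;> linear_combination -h

theorem stmt_8 (α K D H : ℝ) (hα : 0 < α) (hK : 0 < K) (hD : 0 < D) (hH : 0 < H)
    (a : ℝ → ℝ)
    (ha : ∀ g : ℝ, 0 < g → 0 < a g ∧
      α * K / D + g * H / α + g * H / D * a g = g * H / α * Real.exp (α * a g / D)) :
    (∀ g : ℝ, 0 < g →
      HasDerivAt a (-(α * K / (g ^ 2 * H * (Real.exp (α * a g / D) - 1)))) g ∧
      -(α * K / (g ^ 2 * H * (Real.exp (α * a g / D) - 1))) < 0) ∧
    StrictAntiOn a (Set.Ioi 0) := by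
  have ha' : ∀ g, 0 < g → 0 < a g ∧ g * expGap α D H (a g) = α * K / D := fun g hg =>
    ⟨(ha g hg).1, (mul_expGap_eq_iff α K D H g (a g)).2 (ha g hg).2⟩
  have hmono := (strictMonoOn_expGap hα hD hH).mono Ioi_subset_Ici_self
  have hpos := fun x (hx : 0 < x) => expGap_pos hα hD hH hx
  have hc : 0 < α * K / D := by positivity
  refine ⟨fun g hg => ?_, strictAntiOn_of_mul_eq_const hmono hc ha'⟩
  have hderiv := expGap_deriv_pos hα hD hH (ha g hg).1
  have hE : 0 < exp (α * a g / D) - 1 := pos_of_mul_pos_right hderiv (by positivity)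
  refine ⟨?_, neg_neg_of_pos (by positivity)⟩
  convert hasDerivAt_of_mul_eq_const hmono hpos hc ha' hg
    (hasDerivAt_expGap hα.ne' (a g)) hderiv.ne' using 2
  field_simp
end

section
/- With a_g the unique positive solution of (αK/D) + (gH/α) + (gH/D)·a = (gH/α)·e^{αa/D}, the product g·a_g is strictly increasing in g, tends to 0 as g → 0⁺, and tends to ∞ as g → ∞. -/
/-!
Put `x_g = α a_g / D` and `c = α²K / (HD)`. Dividing the defining equation by `gH/α` turns it
into `F(x_g) = c / g` for `F(x) = eˣ - 1 - x`, and then `g a_g = (Dc/α) · x_g / F(x_g)`.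
Since `F` is strictly convex with `F(0) = 0`, its slope `F(x)/x` increases on `(0, ∞)`, so `F`
increases there and `x ↦ x / F(x)` decreases. Hence `x_g` decreases in `g` and `g a_g` increases.
As `g → 0⁺`, `F(x_g) → ∞` forces `x_g → ∞`, where `x / F(x) ≤ 2/x → 0`; as `g → ∞`,
`x_g² / 2 ≤ F(x_g) → 0` forces `x_g → 0⁺`, where `x / F(x) ≥ 1/x → ∞`.
-/

open Real Filter Set Topology

noncomputable def expSubOneSubId (x : ℝ) : ℝ := exp x - 1 - x

lemma expSubOneSubId_zero : expSubOneSubId 0 = 0 := by simp [expSubOneSubId]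

lemma expSubOneSubId_pos {x : ℝ} (hx : x ≠ 0) : 0 < expSubOneSubId x := by
  have := add_one_lt_exp hx
  unfold expSubOneSubId
  linarith

lemma expSubOneSubId_le_exp {x : ℝ} (hx : 0 ≤ x) : expSubOneSubId x ≤ exp x := by
  unfold expSubOneSubId
  linarith

lemma sq_div_two_le_expSubOneSubId {x : ℝ} (hx : 0 ≤ x) : x ^ 2 / 2 ≤ expSubOneSubId x := by
  have := quadratic_le_exp_of_nonneg hx
  unfold expSubOneSubId
  linarith

lemma expSubOneSubId_le_sq {x : ℝ} (hx : |x| ≤ 1) : expSubOneSubId x ≤ x ^ 2 :=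
  (le_abs_self _).trans (abs_exp_sub_one_sub_id_le hx)

lemma strictConvexOn_expSubOneSubId : StrictConvexOn ℝ univ expSubOneSubId := by
  have h : expSubOneSubId = exp - ((fun _ => 1) + id) := by
    funext x
    simp only [expSubOneSubId, Pi.sub_apply, Pi.add_apply, id]
    ring
  rw [h]
  exact strictConvexOn_exp.sub_concaveOn
    ((concaveOn_const _ convex_univ).add (concaveOn_id convex_univ))

lemma strictMonoOn_expSubOneSubId_div_self :
    StrictMonoOn (fun x => expSubOneSubId x / x) (Ioi 0) := by
  intro x hx y hy hxy
  simpa [expSubOneSubId_zero] using strictConvexOn_expSubOneSubId.secant_strict_mono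
    (mem_univ 0) (mem_univ x) (mem_univ y) (ne_of_gt hx) (ne_of_gt hy) hxy

lemma strictMonoOn_expSubOneSubId : StrictMonoOn expSubOneSubId (Ioi 0) := by
  rintro x (hx : 0 < x) y (hy : 0 < y) hxy
  have hslope := strictMonoOn_expSubOneSubId_div_self hx hy hxy
  have hx' : 0 < expSubOneSubId x / x := div_pos (expSubOneSubId_pos hx.ne') hx
  calc expSubOneSubId x = x * (expSubOneSubId x / x) := by field_simp
    _ < y * (expSubOneSubId y / y) := mul_lt_mul hxy hslope.le hx' hy.le
    _ = expSubOneSubId y := by field_simp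

lemma strictAntiOn_self_div_expSubOneSubId :
    StrictAntiOn (fun x => x / expSubOneSubId x) (Ioi 0) := by
  intro x hx y hy hxy
  have hslope := strictMonoOn_expSubOneSubId_div_self hx hy hxy
  have hx' : 0 < expSubOneSubId x / x := div_pos (expSubOneSubId_pos (ne_of_gt hx)) hx
  simpa only [inv_div] using inv_strictAntiOn hx' (hx'.trans hslope) hslope

lemma tendsto_self_div_expSubOneSubId_atTop :
    Tendsto (fun x => x / expSubOneSubId x) atTop (𝓝 0) := by
  have hnonneg : ∀ᶠ x in atTop, 0 ≤ x / expSubOneSubId x := by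
    filter_upwards [eventually_gt_atTop 0] with x hx
    exact div_nonneg hx.le (expSubOneSubId_pos hx.ne').le
  have hbound : ∀ᶠ x in atTop, x / expSubOneSubId x ≤ 2 / x := by
    filter_upwards [eventually_gt_atTop 0] with x hx
    have := sq_div_two_le_expSubOneSubId hx.le
    rw [div_le_div_iff₀ (expSubOneSubId_pos hx.ne') hx]
    nlinarith
  exact tendsto_of_tendsto_of_tendsto_of_le_of_le' tendsto_const_nhds
    (tendsto_const_nhds.div_atTop tendsto_id) hnonneg hbound

lemma tendsto_self_div_expSubOneSubId_nhdsGT_zero :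
    Tendsto (fun x => x / expSubOneSubId x) (𝓝[>] 0) atTop := by
  refine tendsto_atTop_mono' _ ?_ tendsto_inv_nhdsGT_zero
  filter_upwards [Ioo_mem_nhdsGT (one_pos : (0 : ℝ) < 1)] with x ⟨hx0, hx1⟩
  have := expSubOneSubId_le_sq (abs_le.mpr ⟨by linarith, hx1.le⟩)
  rw [inv_eq_one_div, div_le_div_iff₀ hx0 (expSubOneSubId_pos hx0.ne')]
  nlinarith

section Limits

variable {ι : Type*} {l : Filter ι} {x : ι → ℝ}

lemma tendsto_atTop_of_tendsto_expSubOneSubId_comp (hpos : ∀ᶠ i in l, 0 ≤ x i)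
    (h : Tendsto (fun i => expSubOneSubId (x i)) l atTop) : Tendsto x l atTop :=
  tendsto_exp_comp_atTop.mp
    (tendsto_atTop_mono' l (hpos.mono fun _ hi => expSubOneSubId_le_exp hi) h)

lemma tendsto_nhdsGT_zero_of_tendsto_expSubOneSubId_comp (hpos : ∀ᶠ i in l, 0 < x i)
    (h : Tendsto (fun i => expSubOneSubId (x i)) l (𝓝 0)) : Tendsto x l (𝓝[>] 0) := by
  refine tendsto_nhdsWithin_iff.mpr ⟨?_, hpos⟩
  have hsqrt : Tendsto (fun i => √(2 * expSubOneSubId (x i))) l (𝓝 0) := by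
    simpa using (h.const_mul 2).sqrt
  refine tendsto_of_tendsto_of_tendsto_of_le_of_le' tendsto_const_nhds hsqrt
    (hpos.mono fun _ hi => hi.le) ?_
  filter_upwards [hpos] with i hi
  exact le_sqrt_of_sq_le (by linarith [sq_div_two_le_expSubOneSubId hi.le])

end Limits

section Inverse

variable {c : ℝ} {x : ℝ → ℝ}

lemma strictAntiOn_of_expSubOneSubId_eq_div (hc : 0 < c) (hpos : ∀ g, 0 < g → 0 < x g)
    (hx : ∀ g, 0 < g → expSubOneSubId (x g) = c / g) : StrictAntiOn x (Ioi 0) := by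
  rintro g₁ (hg₁ : 0 < g₁) g₂ (hg₂ : 0 < g₂) hlt
  refine (strictMonoOn_expSubOneSubId.lt_iff_lt (hpos g₂ hg₂) (hpos g₁ hg₁)).mp ?_
  rw [hx g₁ hg₁, hx g₂ hg₂]
  exact div_lt_div_of_pos_left hc hg₁ hlt

lemma tendsto_atTop_of_expSubOneSubId_eq_div (hc : 0 < c) (hpos : ∀ g, 0 < g → 0 < x g)
    (hx : ∀ g, 0 < g → expSubOneSubId (x g) = c / g) : Tendsto x (𝓝[>] 0) atTop := by
  have hev : ∀ᶠ g in 𝓝[>] (0 : ℝ), 0 < g := self_mem_nhdsWithin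
  refine tendsto_atTop_of_tendsto_expSubOneSubId_comp (hev.mono fun g hg => (hpos g hg).le) ?_
  refine (tendsto_inv_nhdsGT_zero.const_mul_atTop hc).congr' ?_
  filter_upwards [hev] with g hg
  rw [hx g hg, div_eq_mul_inv]

lemma tendsto_nhdsGT_zero_of_expSubOneSubId_eq_div (hpos : ∀ g, 0 < g → 0 < x g)
    (hx : ∀ g, 0 < g → expSubOneSubId (x g) = c / g) : Tendsto x atTop (𝓝[>] 0) := by
  have hev : ∀ᶠ g in atTop, (0 : ℝ) < g := eventually_gt_atTop 0
  refine tendsto_nhdsGT_zero_of_tendsto_expSubOneSubId_comp (hev.mono hpos) ?_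
  refine ((tendsto_const_nhds (x := c)).div_atTop tendsto_id).congr' ?_
  filter_upwards [hev] with g hg
  rw [hx g hg, id]

end Inverse

lemma expSubOneSubId_eq_div_of_eq {α K D H g y : ℝ} (hα : 0 < α) (hD : 0 < D) (hH : 0 < H)
    (hg : 0 < g) (h : α * K / D + g * H / α + g * H / D * y = g * H / α * exp (α * y / D)) :
    expSubOneSubId (α * y / D) = α ^ 2 * K / (H * D) / g := by
  unfold expSubOneSubId
  field_simp
  field_simp at h
  linear_combination -h

theorem stmt_9 (α K D H : ℝ) (hα : 0 < α) (hK : 0 < K) (hD : 0 < D) (hH : 0 < H)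
    (a : ℝ → ℝ)
    (ha : ∀ g : ℝ, 0 < g → 0 < a g ∧
      α * K / D + g * H / α + g * H / D * a g = g * H / α * Real.exp (α * a g / D)) :
    StrictMonoOn (fun g : ℝ => g * a g) (Set.Ioi 0) ∧
    Filter.Tendsto (fun g : ℝ => g * a g) (nhdsWithin 0 (Set.Ioi 0)) (nhds 0) ∧
    Filter.Tendsto (fun g : ℝ => g * a g) Filter.atTop Filter.atTop := by
  set c := α ^ 2 * K / (H * D)
  have hc : 0 < c := by positivity
  set x : ℝ → ℝ := fun g => α * a g / D
  have hpos : ∀ g, 0 < g → 0 < x g := fun g hg => by have := (ha g hg).1; positivity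
  have hx : ∀ g, 0 < g → expSubOneSubId (x g) = c / g := fun g hg =>
    expSubOneSubId_eq_div_of_eq hα hD hH hg (ha g hg).2
  have hprod : EqOn (fun g => D * c / α * (x g / expSubOneSubId (x g))) (fun g => g * a g)
      (Ioi 0) := by
    intro g (hg : 0 < g)
    simp only [hx g hg, x]
    field_simp
  refine ⟨?_, ?_, ?_⟩
  · refine StrictMonoOn.congr (fun g₁ hg₁ g₂ hg₂ hlt => ?_) hprod
    refine mul_lt_mul_of_pos_left ?_ (by positivity)
    exact strictAntiOn_self_div_expSubOneSubId (hpos g₂ hg₂) (hpos g₁ hg₁)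
      (strictAntiOn_of_expSubOneSubId_eq_div hc hpos hx hg₁ hg₂ hlt)
  · refine Tendsto.congr' hprod.eventuallyEq_nhdsWithin ?_
    simpa using (tendsto_self_div_expSubOneSubId_atTop.comp
      (tendsto_atTop_of_expSubOneSubId_eq_div hc hpos hx)).const_mul (D * c / α)
  · refine Tendsto.congr' (eventually_gt_atTop 0 |>.mono hprod) ?_
    exact (tendsto_self_div_expSubOneSubId_nhdsGT_zero.comp
      (tendsto_nhdsGT_zero_of_expSubOneSubId_eq_div hpos hx)).const_mul_atTop (by positivity)
end

section
/- Under the normalization in Lemma l9(b), for each g > 0 the values g and a_g are in bijective correspondence: for every a > 0 there is a unique g > 0 with a = a_g, and lim_{g→0⁺} a_g = ∞, lim_{g→∞} a_g = 0. -/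
/-!
Writing `φ x = exp x - 1 - x`, the defining equation of `a_g`, multiplied by `α / (g H)`, says
exactly `φ (α a_g / D) = α²K / (H D g)`. Since `φ` is strictly increasing on `[0, ∞)` with
`φ 0 = 0`, the value `a_g` determines `g`, every `b > 0` arises as `a_g` for
`g = α²K / (H D φ (α b / D))`, and `a_g` tends to `∞` resp. `0` as `α²K / (H D g)` does.
-/

open Filter Set Topology Real

theorem strictMonoOn_exp_sub_one_sub_self :
    StrictMonoOn (fun x : ℝ => exp x - 1 - x) (Ici 0) := by
  refine strictMonoOn_of_deriv_pos (convex_Ici 0) (by fun_prop) fun x hx => ?_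
  rw [interior_Ici] at hx
  have hderiv : HasDerivAt (fun x : ℝ => exp x - 1 - x) (exp x - 1) x :=
    ((hasDerivAt_exp x).sub_const 1).sub (hasDerivAt_id x)
  rw [hderiv.deriv, sub_pos]
  exact one_lt_exp_iff.2 hx

section LimitsThroughStrictMono

variable {α β ι : Type*} [LinearOrder α] [LinearOrder β] {f : α → β} {x₀ : α} {l : Filter ι}
  {u : ι → α}

theorem StrictMonoOn.tendsto_atTop_of_tendsto_comp [NoMaxOrder β] (hf : StrictMonoOn f (Ici x₀))
    (hu : ∀ᶠ i in l, x₀ ≤ u i) (h : Tendsto (f ∘ u) l atTop) : Tendsto u l atTop := by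
  refine tendsto_atTop.2 fun M => ?_
  filter_upwards [hu, h.eventually_gt_atTop (f (max M x₀))] with i hi hfi
  exact (le_max_left M x₀).trans ((hf.lt_iff_lt (le_max_right M x₀) hi).1 hfi).le

theorem StrictMonoOn.tendsto_of_tendsto_comp [TopologicalSpace α] [OrderTopology α]
    [TopologicalSpace β] [OrderTopology β] (hf : StrictMonoOn f (Ici x₀))
    (hu : ∀ᶠ i in l, x₀ ≤ u i) (h : Tendsto (f ∘ u) l (𝓝 (f x₀))) : Tendsto u l (𝓝 x₀) := by
  refine tendsto_order.2 ⟨fun c hc => hu.mono fun i hi => hc.trans_le hi, fun c hc => ?_⟩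
  have hfc : f x₀ < f c := hf self_mem_Ici hc.le hc
  filter_upwards [hu, h.eventually (gt_mem_nhds hfc)] with i hi hfi
  exact (hf.lt_iff_lt hi hc.le).1 hfi

end LimitsThroughStrictMono

theorem exp_sub_one_sub_eq_of_eq {α K D H g x : ℝ} (hα : 0 < α) (hD : 0 < D) (hH : 0 < H)
    (hg : 0 < g)
    (h : α * K / D + g * H / α + g * H / D * x = g * H / α * exp (α * x / D)) :
    exp (α * x / D) - 1 - α * x / D = α ^ 2 * K / (H * D) / g := by
  field_simp at h ⊢
  linear_combination -h

theorem stmt_11 (α K D H : ℝ) (hα : 0 < α) (hK : 0 < K) (hD : 0 < D) (hH : 0 < H)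
    (a : ℝ → ℝ)
    (ha : ∀ g : ℝ, 0 < g → 0 < a g ∧
      α * K / D + g * H / α + g * H / D * a g = g * H / α * Real.exp (α * a g / D)) :
    (∀ b : ℝ, 0 < b → ∃! g : ℝ, 0 < g ∧ a g = b) ∧
    Filter.Tendsto a (nhdsWithin 0 (Set.Ioi 0)) Filter.atTop ∧
    Filter.Tendsto a Filter.atTop (nhds 0) := by
  set F : ℝ → ℝ := fun x => exp (α * x / D) - 1 - α * x / D
  set c := α ^ 2 * K / (H * D)
  have hc : 0 < c := by positivity
  have hF : StrictMonoOn F (Ici 0) :=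
    strictMonoOn_exp_sub_one_sub_self.comp (fun x _ y _ hxy => by gcongr) fun x hx => by
      simp only [mem_Ici] at hx ⊢; positivity
  have hF0 : F 0 = 0 := by simp [F]
  have hFa : ∀ g, 0 < g → F (a g) = c / g := fun g hg =>
    exp_sub_one_sub_eq_of_eq hα hD hH hg (ha g hg).2
  refine ⟨fun b hb => ?_, ?_, ?_⟩
  · have hFb : 0 < F b := hF0 ▸ hF self_mem_Ici hb.le hb
    refine ⟨c / F b, ⟨by positivity, ?_⟩, fun g ⟨hg, hgb⟩ => ?_⟩
    · refine hF.injOn (ha _ (by positivity)).1.le hb.le ?_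
      rw [hFa _ (by positivity), div_div_cancel₀ hc.ne']
    · rw [← hgb, hFa g hg, div_div_cancel₀ hc.ne']
  · refine hF.tendsto_atTop_of_tendsto_comp ?_ ?_
    · filter_upwards [self_mem_nhdsWithin] with g hg using (ha g hg).1.le
    · refine (tendsto_inv_nhdsGT_zero.const_mul_atTop hc).congr' ?_
      filter_upwards [self_mem_nhdsWithin] with g hg
      simp [hFa g hg, div_eq_mul_inv]
  · refine hF.tendsto_of_tendsto_comp ?_ ?_
    · filter_upwards [eventually_gt_atTop 0] with g hg using (ha g hg).1.le
    · rw [hF0]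
      refine ((tendsto_const_nhds (x := c)).div_atTop tendsto_id).congr' ?_
      filter_upwards [eventually_gt_atTop 0] with g hg
      simp [hFa g hg]
end
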